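/- Let f₁,…,f_r be holomorphic functions on a connected open set U ⊆ ℂ containing 0, and c₁,…,c_r real constants, and suppose Σ_j c_j f_j(ζ) conj(f_j(ζ)) = 1/(1 − |ζ|²)^k on U ∩ 𝔻 for some integer k ≥ 1. Then r must be infinite; i.e., 1/(1−|ζ|²)^k admits no finite-rank representation Σ_{j=1}^r c_j |f_j|². -/

import Mathlib

open Complex Filter Asymptotics

noncomputable section

/-- If `f` is complex-differentiable at `conj z`, then `w ↦ conj (f (conj w))` is
complex-differentiable at `z`. -/
lemma hasDerivAt_conj_conj {f : ℂ → ℂ} {z d : ℂ}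
    (hf : HasDerivAt f d ((starRingEnd ℂ) z)) :
    HasDerivAt (fun w => (starRingEnd ℂ) (f ((starRingEnd ℂ) w))) ((starRingEnd ℂ) d) z := by
  rw [hasDerivAt_iff_isLittleO] at hf ⊢
  have h2 := hf.comp_tendsto ((Complex.continuous_conj.tendsto z))
  rw [← isLittleO_norm_left, ← isLittleO_norm_right] at h2 ⊢
  convert h2 using 1
  · funext x
    simp only [Function.comp]
    have e : (starRingEnd ℂ) (f ((starRingEnd ℂ) x)) - (starRingEnd ℂ) (f ((starRingEnd ℂ) z))
        - (x - z) • (starRingEnd ℂ) d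
        = (starRingEnd ℂ) (f ((starRingEnd ℂ) x) - f ((starRingEnd ℂ) z)
            - ((starRingEnd ℂ) x - (starRingEnd ℂ) z) • d) := by
      simp only [smul_eq_mul, map_sub, map_mul, Complex.conj_conj]
    rw [e, RCLike.norm_conj]
  · funext x
    simp only [Function.comp]
    rw [← map_sub, RCLike.norm_conj]

/-- A function holomorphic on a disc around `0` vanishing on the real segment vanishes on the
whole disc. -/
lemma zero_on_ball_of_zero_on_real {F : ℂ → ℂ} {ε : ℝ} (hε : 0 < ε)
    (hF : DifferentiableOn ℂ F (Metric.ball 0 ε))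
    (h : ∀ t : ℝ, |t| < ε → F t = 0) : Set.EqOn F 0 (Metric.ball (0:ℂ) ε) := by
  have hA : AnalyticOnNhd ℂ F (Metric.ball 0 ε) := hF.analyticOnNhd Metric.isOpen_ball
  apply hA.eqOn_zero_of_preconnected_of_frequently_eq_zero
    (convex_ball (0:ℂ) ε).isPreconnected (Metric.mem_ball_self hε)
  rw [Filter.frequently_iff]
  intro W hW
  rw [Metric.mem_nhdsWithin_iff] at hW
  obtain ⟨δ, hδ, hsub⟩ := hW
  have ht0 : 0 < min (ε/2) (δ/2) := by positivity
  refine ⟨((min (ε/2) (δ/2) : ℝ) : ℂ), hsub ⟨?_, ?_⟩, h _ ?_⟩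
  · simp only [Metric.mem_ball, Complex.dist_eq, sub_zero, Complex.norm_real, Real.norm_eq_abs]
    rw [abs_of_pos ht0]
    calc min (ε/2) (δ/2) ≤ δ/2 := min_le_right _ _
      _ < δ := by linarith
  · simp only [Set.mem_compl_iff, Set.mem_singleton_iff]
    exact Complex.ofReal_ne_zero.mpr (ne_of_gt ht0)
  · rw [abs_of_pos ht0]
    calc min (ε/2) (δ/2) ≤ ε/2 := min_le_left _ _
      _ < ε := by linarith

/-- An entire function vanishing on a disc vanishes everywhere. -/
lemma zero_everywhere_of_zero_on_ball {F : ℂ → ℂ} {ε : ℝ} (hε : 0 < ε)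
    (hF : Differentiable ℂ F) (h : Set.EqOn F 0 (Metric.ball (0:ℂ) ε)) (z : ℂ) : F z = 0 := by
  have hA : AnalyticOnNhd ℂ F Set.univ :=
    hF.differentiableOn.analyticOnNhd isOpen_univ
  have hfreq : ∃ᶠ x in nhdsWithin (0:ℂ) {(0:ℂ)}ᶜ, F x = 0 := by
    have hev : ∀ᶠ x in nhds (0:ℂ), F x = 0 :=
      Filter.eventually_of_mem (Metric.ball_mem_nhds 0 hε) (fun x hx => h hx)
    exact (hev.filter_mono nhdsWithin_le_nhds).frequently
  exact hA.eqOn_zero_of_preconnected_of_frequently_eq_zero isPreconnected_univ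
    (Set.mem_univ 0) hfreq (Set.mem_univ z)

theorem stmt7 (U : Set ℂ) (hU : IsOpen U) (hconn : IsConnected U) (h0 : (0 : ℂ) ∈ U)
    (k : ℕ) (hk : 1 ≤ k) (r : ℕ) (c : Fin r → ℝ) (f : Fin r → ℂ → ℂ)
    (hf : ∀ j, DifferentiableOn ℂ (f j) (U ∩ Metric.ball (0 : ℂ) 1))
    (heq : ∀ ζ ∈ U ∩ Metric.ball (0 : ℂ) 1,
      (∑ j, (c j : ℂ) * f j ζ * (starRingEnd ℂ) (f j ζ))
        = ((((1 - ‖ζ‖ ^ 2) ^ k)⁻¹ : ℝ) : ℂ)) :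
    False := by
  obtain ⟨δ, hδpos, hδ⟩ := Metric.isOpen_iff.mp hU 0 h0
  set ε : ℝ := min δ 1 / 2 with hεdef
  have hεle : 2 * ε ≤ min δ 1 := by rw [hεdef]; ring_nf; exact le_refl _
  have hε : 0 < ε := by
    have := lt_min hδpos one_pos
    rw [hεdef]; linarith
  have hmem : ∀ (y : ℂ) (R : ℝ), y ∈ Metric.ball (0:ℂ) R ↔ ‖y‖ < R := by
    intro y R; simp [Metric.mem_ball, Complex.dist_eq]
  have hBU : ∀ z : ℂ, ‖z‖ < 2 * ε → z ∈ U ∩ Metric.ball (0:ℂ) 1 := by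
    intro z hz
    have h1 : ‖z‖ < δ := lt_of_lt_of_le hz (hεle.trans (min_le_left _ _))
    have h2 : ‖z‖ < 1 := lt_of_lt_of_le hz (hεle.trans (min_le_right _ _))
    exact ⟨hδ ((hmem z δ).mpr h1), (hmem z 1).mpr h2⟩
  have h2ε1 : 2 * ε ≤ 1 := hεle.trans (min_le_right _ _)
  have habs : ∀ z w : ℂ, ‖z‖ < 2*ε → ‖w‖ < 2*ε → 1 - z * w ≠ 0 := by
    intro z w hz hw h
    have hzw : z * w = 1 := by linear_combination -h
    have h1 : ‖(z*w)‖ < 1 := by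
      rw [norm_mul]
      nlinarith [norm_nonneg z, norm_nonneg w]
    rw [hzw] at h1; simp at h1
  set g : Fin r → ℂ → ℂ := fun j w => (starRingEnd ℂ) (f j ((starRingEnd ℂ) w)) with hgdef
  have hfd : ∀ j, ∀ z : ℂ, ‖z‖ < 2*ε → DifferentiableAt ℂ (f j) z := by
    intro j z hz
    exact (hf j).differentiableAt ((hU.inter Metric.isOpen_ball).mem_nhds (hBU z hz))
  have hgd : ∀ j, ∀ w : ℂ, ‖w‖ < 2*ε → DifferentiableAt ℂ (g j) w := by
    intro j w hw
    have hcw : ‖((starRingEnd ℂ) w)‖ < 2*ε := by rwa [Complex.norm_conj]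
    exact (hasDerivAt_conj_conj ((hfd j _ hcw).hasDerivAt)).differentiableAt
  set D : ℂ → ℂ → ℂ :=
    fun z w => (∑ j, (c j : ℂ) * f j z * g j w) - ((1 - z * w)^k)⁻¹ with hDdef
  -- diagonal values
  have hDdiag : ∀ z : ℂ, ‖z‖ < 2*ε → D z ((starRingEnd ℂ) z) = 0 := by
    intro z hz
    have hz1 : ‖z‖ < 1 := lt_of_lt_of_le hz h2ε1
    have h1 := heq z (hBU z hz)
    rw [hDdef]
    simp only [sub_eq_zero]
    have hgc : ∀ j, g j ((starRingEnd ℂ) z) = (starRingEnd ℂ) (f j z) := by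
      intro j; rw [hgdef]; simp
    calc (∑ j, (c j:ℂ) * f j z * g j ((starRingEnd ℂ) z))
        = ∑ j, (c j:ℂ) * f j z * (starRingEnd ℂ) (f j z) := by
          apply Finset.sum_congr rfl; intro j _; rw [hgc j]
      _ = ((((1 - ‖z‖ ^ 2) ^ k)⁻¹ : ℝ) : ℂ) := h1
      _ = ((1 - z * (starRingEnd ℂ) z)^k)⁻¹ := by
          rw [Complex.mul_conj, ← Complex.sq_norm]
          push_cast
          ring_nf
  -- differentiability of D along affine curves
  have hDdiff : ∀ (a b : ℂ → ℂ), Differentiable ℂ a → Differentiable ℂ b →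
      (∀ x : ℂ, ‖x‖ < ε → ‖(a x)‖ < 2*ε) →
      (∀ x : ℂ, ‖x‖ < ε → ‖(b x)‖ < 2*ε) →
      DifferentiableOn ℂ (fun x => D (a x) (b x)) (Metric.ball 0 ε) := by
    intro a b ha hb haB hbB
    intro x hx
    rw [hmem] at hx
    apply DifferentiableAt.differentiableWithinAt
    rw [hDdef]
    apply DifferentiableAt.sub
    · apply DifferentiableAt.fun_sum
      intro j _
      exact (((differentiableAt_const _).mul
        ((hfd j _ (haB x hx)).comp x (ha x))).mul ((hgd j _ (hbB x hx)).comp x (hb x)))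
    · apply DifferentiableAt.inv
      · exact (((differentiableAt_const _).sub ((ha x).mul (hb x))).pow k)
      · exact pow_ne_zero _ (habs _ _ (haB x hx) (hbB x hx))
  -- polarization: D vanishes on the small bidisc
  have hD0 : ∀ z w : ℂ, ‖z‖ < ε → ‖w‖ < ε → D z w = 0 := by
    have hmem : ∀ (y : ℂ) (R : ℝ), y ∈ Metric.ball (0:ℂ) R ↔ ‖y‖ < R := by
      intro y R; simp [Metric.mem_ball, Complex.dist_eq]
    have hbound : ∀ u v : ℂ, ‖u‖ < ε → ‖v‖ < ε →
        ‖(u + I * v)‖ < 2 * ε ∧ ‖(u - I * v)‖ < 2 * ε := by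
      intro u v hu hv
      constructor
      · calc ‖(u + I * v)‖ ≤ ‖u‖ + ‖(I * v)‖ :=
              norm_add_le _ _
          _ = ‖u‖ + ‖v‖ := by rw [norm_mul, Complex.norm_I, one_mul]
          _ < 2 * ε := by linarith
      · calc ‖(u - I * v)‖ ≤ ‖u‖ + ‖(I * v)‖ := by
              rw [sub_eq_add_neg]
              calc ‖(u + -(I*v))‖ ≤ ‖u‖ + ‖(-(I*v))‖ :=
                    norm_add_le _ _
                _ = ‖u‖ + ‖(I*v)‖ := by rw [norm_neg]
          _ = ‖u‖ + ‖v‖ := by rw [norm_mul, Complex.norm_I, one_mul]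
          _ < 2 * ε := by linarith
    -- step 1 : real v, all u
    have hE1 : ∀ s : ℝ, |s| < ε → ∀ u : ℂ, ‖u‖ < ε →
        D (u + I * s) (u - I * s) = 0 := by
      intro s hs
      have hsC : ‖((s:ℝ) : ℂ)‖ < ε := by rwa [Complex.norm_real, Real.norm_eq_abs]
      have hdiff := hDdiff (fun x => x + I * (s:ℂ)) (fun x => x - I * (s:ℂ))
        (by fun_prop) (by fun_prop)
        (fun x hx => (hbound x _ hx hsC).1) (fun x hx => (hbound x _ hx hsC).2)
      have hreal : ∀ t : ℝ, |t| < ε → D ((t:ℂ) + I * s) ((t:ℂ) - I * s) = 0 := by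
        intro t ht
        have htC : ‖((t:ℝ) : ℂ)‖ < ε := by rwa [Complex.norm_real, Real.norm_eq_abs]
        have hzB : ‖((t:ℂ) + I * s)‖ < 2 * ε := (hbound _ _ htC hsC).1
        have hc : (starRingEnd ℂ) ((t:ℂ) + I * (s:ℂ)) = (t:ℂ) - I * (s:ℂ) := by
          rw [map_add, map_mul, Complex.conj_I, Complex.conj_ofReal, Complex.conj_ofReal]
          ring
        have := hDdiag _ hzB
        rwa [hc] at this
      intro u hu
      exact zero_on_ball_of_zero_on_real hε hdiff hreal ((hmem u ε).mpr hu)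
    -- step 2 : all u, all v
    have hE2 : ∀ u : ℂ, ‖u‖ < ε → ∀ v : ℂ, ‖v‖ < ε →
        D (u + I * v) (u - I * v) = 0 := by
      intro u hu
      have hdiff := hDdiff (fun x => u + I * x) (fun x => u - I * x)
        (by fun_prop) (by fun_prop)
        (fun x hx => (hbound u x hu hx).1) (fun x hx => (hbound u x hu hx).2)
      have hreal : ∀ t : ℝ, |t| < ε → D (u + I * (t:ℂ)) (u - I * (t:ℂ)) = 0 :=
        fun t ht => hE1 t ht u hu
      intro v hv
      exact zero_on_ball_of_zero_on_real hε hdiff hreal ((hmem v ε).mpr hv)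
    intro z w hz hw
    have hu : ‖((z + w)/2)‖ < ε := by
      rw [norm_div, Complex.norm_two]
      have : ‖(z + w)‖ ≤ ‖z‖ + ‖w‖ := norm_add_le _ _
      linarith
    have hv : ‖((z - w)/(2*I))‖ < ε := by
      rw [norm_div, norm_mul, Complex.norm_two, Complex.norm_I, mul_one]
      have : ‖(z - w)‖ ≤ ‖z‖ + ‖w‖ := by
        rw [sub_eq_add_neg]
        calc ‖(z + -w)‖ ≤ ‖z‖ + ‖(-w)‖ := norm_add_le _ _
          _ = ‖z‖ + ‖w‖ := by rw [norm_neg]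
      linarith
    have h := hE2 _ hu _ hv
    have e1 : (z + w)/2 + I * ((z - w)/(2*I)) = z := by
      field_simp
      ring
    have e2 : (z + w)/2 - I * ((z - w)/(2*I)) = w := by
      field_simp
      ring
    rwa [e1, e2] at h
  -- reproducing identity
  have hker : ∀ w z : ℂ, ‖w‖ < ε → ‖z‖ < ε →
      ((1 - z * w)^k)⁻¹ = ∑ j, (c j:ℂ) * g j w * f j z := by
    intro w z hw hz
    have h := hD0 z w hz hw
    rw [hDdef] at h
    rw [sub_eq_zero] at h
    rw [← h]
    apply Finset.sum_congr rfl
    intro j _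
    ring
  clear hDdiag hDdiff hD0 heq hf hfd hgd
  have hεε : ε < 2 * ε := by linarith
  have hmem : ∀ (y : ℂ) (R : ℝ), y ∈ Metric.ball (0:ℂ) R ↔ ‖y‖ < R := by
    intro y R; simp [Metric.mem_ball, Complex.dist_eq]
  -- distinct small nonzero points
  set w : Fin (r+1) → ℂ := fun i => ((ε / ((i:ℕ) + 2) : ℝ) : ℂ) with hwdef
  have hwpos : ∀ i, (0:ℝ) < ε / ((i:ℕ) + 2) := by
    intro i; positivity
  have hwabs : ∀ i, ‖(w i)‖ < ε := by
    intro i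
    rw [hwdef]
    simp only [Complex.norm_real, Real.norm_eq_abs]
    rw [abs_of_pos (hwpos i)]
    rw [div_lt_iff₀ (by positivity)]
    nlinarith [hwpos i]
  have hwne : ∀ i, w i ≠ 0 := by
    intro i
    rw [hwdef]
    exact Complex.ofReal_ne_zero.mpr (ne_of_gt (hwpos i))
  have hwinj : Function.Injective w := by
    intro i j hij
    rw [hwdef] at hij
    simp only [Complex.ofReal_inj] at hij
    have h2i : ((i:ℕ):ℝ) + 2 ≠ 0 := by positivity
    have h2j : ((j:ℕ):ℝ) + 2 ≠ 0 := by positivity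
    field_simp [hε.ne'] at hij
    exact Fin.ext (by exact_mod_cast (add_right_cancel hij.symm))
  -- linear dependence
  have hdep : ¬ LinearIndependent ℂ (fun i : Fin (r+1) => fun j : Fin r => (c j:ℂ) * g j (w i)) := by
    intro hli
    have h1 := hli.fintype_card_le_finrank
    rw [Module.finrank_fintype_fun_eq_card] at h1
    simp [Fintype.card_fin] at h1
  obtain ⟨lam, hsum, i₀, hi₀⟩ := Fintype.not_linearIndependent_iff.mp hdep
  have h0 : ∀ j, ∑ i, lam i * ((c j:ℂ) * g j (w i)) = 0 := by
    intro j
    have := congrFun hsum j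
    simpa [Finset.sum_apply, Pi.smul_apply, smul_eq_mul] using this
  have hcombo : ∀ z : ℂ, ‖z‖ < ε → ∑ i, lam i * ((1 - z * w i)^k)⁻¹ = 0 := by
    intro z hz
    have e1 : ∑ i, lam i * ((1 - z * w i)^k)⁻¹
        = ∑ i, lam i * ∑ j, (c j:ℂ) * g j (w i) * f j z := by
      apply Finset.sum_congr rfl
      intro i _
      rw [hker (w i) z (hwabs i) hz]
    rw [e1]
    simp_rw [Finset.mul_sum]
    rw [Finset.sum_comm]
    apply Finset.sum_eq_zero
    intro j _
    have e2 : ∀ i : Fin (r+1), lam i * ((c j:ℂ) * g j (w i) * f j z)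
        = (lam i * ((c j:ℂ) * g j (w i))) * f j z := fun i => by ring
    simp_rw [e2]
    rw [← Finset.sum_mul, h0 j, zero_mul]
  -- the polynomial-like entire function
  set q : ℂ → ℂ := fun z => ∑ i, lam i * ∏ l ∈ Finset.univ.erase i, (1 - z * w l)^k with hqdef
  have hq : Differentiable ℂ q := by
    apply Differentiable.fun_sum
    intro i _
    apply (differentiable_const _).mul
    apply Differentiable.fun_finsetProd
    intro l _
    exact ((differentiable_const _).sub (differentiable_id.mul_const _)).pow k
  have hq0 : Set.EqOn q 0 (Metric.ball (0:ℂ) ε) := by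
    intro z hz
    rw [hmem] at hz
    have hnz : ∀ l, ((1 - z * w l)^k) ≠ 0 :=
      fun l => pow_ne_zero _ (habs z (w l) (hz.trans hεε) ((hwabs l).trans hεε))
    show q z = 0
    have e3 : q z = (∏ l, (1 - z * w l)^k) * ∑ i, lam i * ((1 - z * w i)^k)⁻¹ := by
      rw [hqdef]
      rw [Finset.mul_sum]
      apply Finset.sum_congr rfl
      intro i _
      rw [← Finset.prod_erase_mul Finset.univ _ (Finset.mem_univ i)]
      field_simp
      rw [eq_div_iff (hnz i)]
    rw [e3, hcombo z hz, mul_zero]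
  have hqall := zero_everywhere_of_zero_on_ball hε hq hq0 (w i₀)⁻¹
  simp only [hqdef] at hqall
  have hred : ∑ i, lam i * ∏ l ∈ Finset.univ.erase i, (1 - (w i₀)⁻¹ * w l)^k
      = lam i₀ * ∏ l ∈ Finset.univ.erase i₀, (1 - (w i₀)⁻¹ * w l)^k := by
    apply Finset.sum_eq_single i₀
    · intro i _ hi
      have hmem₀ : i₀ ∈ Finset.univ.erase i := Finset.mem_erase.mpr ⟨Ne.symm hi, Finset.mem_univ _⟩
      have hzero : (1 - (w i₀)⁻¹ * w i₀)^k = 0 := by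
        rw [inv_mul_cancel₀ (hwne i₀), sub_self]
        exact zero_pow (by omega)
      rw [Finset.prod_eq_zero hmem₀ hzero, mul_zero]
    · intro h; exact absurd (Finset.mem_univ i₀) h
  rw [hred] at hqall
  have hprodne : ∏ l ∈ Finset.univ.erase i₀, (1 - (w i₀)⁻¹ * w l)^k ≠ 0 := by
    apply Finset.prod_ne_zero_iff.mpr
    intro l hl
    apply pow_ne_zero
    intro hcon
    have : (w i₀)⁻¹ * w l = 1 := by linear_combination -hcon
    rw [inv_mul_eq_one₀ (hwne i₀)] at this
    exact (Finset.mem_erase.mp hl).1 (hwinj this.symm)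
  have : lam i₀ = 0 := by
    rcases mul_eq_zero.mp hqall with h | h
    · exact h
    · exact absurd h hprodne
  exact hi₀ this
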